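/- Let V=(Q,D,Δ,w) be a 1-VASS with disequality tests (with single disequality guards). For every n ∈ ℕ and every n-active bounded chain C, |δ_n(C)| ≤ |Q| · |C ∖ U_n|. -/

import Mathlib

namespace VASSPaper

/-- A 1-VASS with disequality tests: states `Q`, transition relation `delta`,
integer weights `w`, and for each state a cofinite set `D q ⊆ ℕ` of allowed counter values. -/
structure OneVASS (Q : Type) where
  delta : Q → Q → Prop
  w : Q → Q → ℤ
  D : Q → Set ℕ
  cofinite : ∀ q, (D q)ᶜ.Finite

variable {Q : Type}

/-- A path is a nonempty sequence of states joined by transitions. -/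
def IsPath (V : OneVASS Q) : List Q → Prop
  | [] => False
  | [_] => True
  | a :: b :: l => V.delta a b ∧ IsPath V (b :: l)

/-- The weight of a path: the sum of the weights of its transitions. -/
def pathWeight (V : OneVASS Q) (π : List Q) : ℤ :=
  (List.zipWith V.w π π.tail).sum

/-- The counter value at position `i` of the run over `π` starting with counter `z`. -/
def counterAt (V : OneVASS Q) (z : ℕ) (π : List Q) (i : ℕ) : ℤ :=
  (z : ℤ) + pathWeight V (π.take (i + 1))

/-- `π` lifts to a run from counter value `z`: all counter values stay nonnegative. -/
def IsRun (V : OneVASS Q) (π : List Q) (z : ℕ) : Prop :=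
  IsPath V π ∧ ∀ i, i < π.length → 0 ≤ counterAt V z π i

/-- A valid run additionally respects all disequality guards. -/
def IsValidRun (V : OneVASS Q) (π : List Q) (z : ℕ) : Prop :=
  IsRun V π z ∧ ∀ i, ∀ h : i < π.length, (counterAt V z π i).toNat ∈ V.D (π.get ⟨i, h⟩)

/-- `π` goes from configuration `c` to configuration `c'`. -/
def RunFromTo (V : OneVASS Q) (π : List Q) (c c' : Q × ℕ) : Prop :=
  π.head? = some c.1 ∧ π.getLast? = some c'.1 ∧ (c'.2 : ℤ) = (c.2 : ℤ) + pathWeight V π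

/-- `c'` is reachable from `c` by a valid run. -/
def Reaches (V : OneVASS Q) (c c' : Q × ℕ) : Prop :=
  ∃ π, IsValidRun V π c.2 ∧ RunFromTo V π c c'

/-- A configuration is unbounded if infinitely many configurations are reachable from it. -/
def Unbounded (V : OneVASS Q) (c : Q × ℕ) : Prop :=
  {c' | Reaches V c c'}.Infinite

/-- `(s,0)` covers the state `t`. -/
def Covers (V : OneVASS Q) (s t : Q) : Prop :=
  ∃ z, Reaches V (s, 0) (t, z)

/-- Every state has at most one disequality guard. -/
def SingleGuard (V : OneVASS Q) : Prop :=
  ∀ q, V.D q = Set.univ ∨ ∃ g : ℕ, V.D q = {g}ᶜ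

/-- The minimum weight of a (possibly empty) prefix of `π`. -/
def pmin (V : OneVASS Q) (π : List Q) : ℤ :=
  ((List.range (π.length + 1)).map fun i => pathWeight V (π.take i)).foldr min 0

/-- The maximum weight of a (possibly empty) suffix of `π`. -/
def smax (V : OneVASS Q) (π : List Q) : ℤ :=
  ((List.range (π.length + 1)).map fun i => pathWeight V (π.drop i)).foldr max 0

/-- A cycle on `q`: a path with at least one transition starting and ending at `q`. -/
def IsCycleOn (V : OneVASS Q) (π : List Q) (q : Q) : Prop :=
  IsPath V π ∧ 2 ≤ π.length ∧ π.head? = some q ∧ π.getLast? = some q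

/-- A simple cycle on `q`. -/
def IsSimpleCycleOn (V : OneVASS Q) (π : List Q) (q : Q) : Prop :=
  IsCycleOn V π q ∧ π.dropLast.Nodup

/-- The set of states lying on a positive-weight simple cycle. -/
def Qplus (V : OneVASS Q) : Set Q :=
  {q | ∃ π, IsSimpleCycleOn V π q ∧ 0 < pathWeight V π}

/-- `γ` is a valid choice of cycles: for each `q ∈ Q₊`, `γ q` is a simple positive cycle
on `q` whose `pmin` is maximal among all positive-weight simple cycles on `q`. -/
def GammaChoice (V : OneVASS Q) (γ : Q → List Q) : Prop :=
  ∀ q ∈ Qplus V,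
    IsSimpleCycleOn V (γ q) q ∧ 0 < pathWeight V (γ q) ∧
      ∀ π, IsSimpleCycleOn V π q → 0 < pathWeight V π → pmin V π ≤ pmin V (γ q)

/-- `Conf₊`: configurations `(q,z)` with `q ∈ Q₊` and `z + pmin (γ q) ≥ 0`. -/
def ConfPlus (V : OneVASS Q) (γ : Q → List Q) : Set (Q × ℕ) :=
  {c | c.1 ∈ Qplus V ∧ 0 ≤ (c.2 : ℤ) + pmin V (γ c.1)}

/-- `W_q`, the weight of the chosen cycle `γ q`, as a natural number. -/
def Wnat (V : OneVASS Q) (γ : Q → List Q) (q : Q) : ℕ :=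
  (pathWeight V (γ q)).toNat

/-- The `q`-residue class of `r` modulo `W_q`. -/
def resClass (V : OneVASS Q) (γ : Q → List Q) (q : Q) (r : ℕ) : Set (Q × ℕ) :=
  {c | c ∈ ConfPlus V γ ∧ c.1 = q ∧ c.2 % Wnat V γ q = r}

/-- `iterCycle π k` is the cycle `π` iterated `k+1` times. -/
def iterCycle (π : List Q) : ℕ → List Q
  | 0 => π
  | k + 1 => iterCycle π k ++ π.tail

/-- Counter values `z < z'` at state `q` are connected by a valid run iterating `γ q`. -/
def chainLinked (V : OneVASS Q) (γ : Q → List Q) (q : Q) (z z' : ℕ) : Prop :=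
  ∃ k, IsValidRun V (iterCycle (γ q) k) z ∧
    (z' : ℤ) = (z : ℤ) + pathWeight V (iterCycle (γ q) k)

/-- Any two configurations of `S` are connected by iterating `γ q`. -/
def ChainCond (V : OneVASS Q) (γ : Q → List Q) (q : Q) (S : Set (Q × ℕ)) : Prop :=
  ∀ c ∈ S, ∀ c' ∈ S, c.2 < c'.2 → chainLinked V γ q c.2 c'.2

/-- A `q`-chain inside the `q`-residue class of `r`: a maximal subset whose
configurations are pairwise connected by iterating `γ q`. -/
def IsChainIn (V : OneVASS Q) (γ : Q → List Q) (q : Q) (r : ℕ) (C : Set (Q × ℕ)) : Prop :=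
  C ⊆ resClass V γ q r ∧ ChainCond V γ q C ∧
    ∀ C', C ⊆ C' → C' ⊆ resClass V γ q r → ChainCond V γ q C' → C' = C

/-- A chain (in some residue class of some state of `Q₊`). -/
def IsChain (V : OneVASS Q) (γ : Q → List Q) (C : Set (Q × ℕ)) : Prop :=
  ∃ q r, q ∈ Qplus V ∧ r < Wnat V γ q ∧ IsChainIn V γ q r C

/-- A set of configurations is bounded if its counter values are bounded. -/
def chainBounded (C : Set (Q × ℕ)) : Prop :=
  BddAbove (Prod.snd '' C)

/-- A residue class is trivial if it consists of a single unbounded chain. -/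
def TrivialClass (V : OneVASS Q) (γ : Q → List Q) (q : Q) (r : ℕ) : Prop :=
  IsChainIn V γ q r (resClass V γ q r) ∧ ¬ chainBounded (resClass V γ q r)

/-- There is a valid run of length `k` (i.e. `k` transitions) from `c` into the set `S`. -/
def RunLenTo (V : OneVASS Q) (c : Q × ℕ) (S : Set (Q × ℕ)) (k : ℕ) : Prop :=
  ∃ π c', c' ∈ S ∧ IsValidRun V π c.2 ∧ RunFromTo V π c c' ∧ π.length = k + 1

/-- Configurations of `Conf₊ \ Un` whose distance to `Un` is minimal among all
configurations of `Conf₊ \ Un`. -/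
def Uprime (V : OneVASS Q) (γ : Q → List Q) (Un : Set (Q × ℕ)) : Set (Q × ℕ) :=
  {c | c ∈ ConfPlus V γ \ Un ∧
    ∃ k, RunLenTo V c Un k ∧
      ∀ c' ∈ ConfPlus V γ \ Un, ∀ j, RunLenTo V c' Un j → k ≤ j}

/-- `S` is downward closed in every chain. -/
def dcClosed (V : OneVASS Q) (γ : Q → List Q) (S : Set (Q × ℕ)) : Prop :=
  ∀ C, IsChain V γ C → ∀ c ∈ S ∩ C, ∀ c' ∈ C, c'.2 ≤ c.2 → c' ∈ S

/-- The inductive sequence `U_n`: `U_0` is the union of the unbounded chains; `U_{n+1}` is the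
smallest superset of `U_n ∪ U'_n` that is downward closed in every chain. -/
def U (V : OneVASS Q) (γ : Q → List Q) : ℕ → Set (Q × ℕ)
  | 0 => ⋃₀ {C | IsChain V γ C ∧ ¬ chainBounded C}
  | n + 1 => ⋂₀ {S | U V γ n ∪ Uprime V γ (U V γ n) ⊆ S ∧ dcClosed V γ S}

/-- `C` is an `n`-active bounded chain in the `q`-residue class of `r`. -/
def nActiveIn (V : OneVASS Q) (γ : Q → List Q) (q : Q) (r : ℕ) (n : ℕ)
    (C : Set (Q × ℕ)) : Prop :=
  IsChainIn V γ q r C ∧ chainBounded C ∧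
    ∃ c ∈ U V γ n ∩ resClass V γ q r, ∃ c' ∈ C, c.2 ≤ c'.2

/-- `δ_n(C)` for a `q`-chain `C`: configurations outside `U_n` whose counter value lies
between two counter values of `C \ U_n`. -/
def deltaC (V : OneVASS Q) (γ : Q → List Q) (n : ℕ) (q : Q) (C : Set (Q × ℕ)) :
    Set (Q × ℕ) :=
  {c | c ∈ ConfPlus V γ ∧ c.1 = q ∧ c ∉ U V γ n ∧
    ∃ z₁ z₂, (q, z₁) ∈ C \ U V γ n ∧ (q, z₂) ∈ C \ U V γ n ∧ z₁ ≤ c.2 ∧ c.2 ≤ z₂}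

/-- `δ_n(R)` for the `q`-residue class `R` of `r`: union of `δ_n(C)` over `n`-active chains. -/
def deltaR (V : OneVASS Q) (γ : Q → List Q) (n : ℕ) (q : Q) (r : ℕ) : Set (Q × ℕ) :=
  {c | ∃ C, nActiveIn V γ q r n C ∧ c ∈ deltaC V γ n q C}

/-- A positive-weight cycle (as a list of states). -/
def IsPosCycle (V : OneVASS Q) (π : List Q) : Prop :=
  2 ≤ π.length ∧ π.head? = π.getLast? ∧ 0 < pathWeight V π

/-- A path is primitive if no proper infix of it is a positive-weight cycle. -/
def Primitive (V : OneVASS Q) (π : List Q) : Prop :=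
  ∀ i l, (π.drop i).take l ≠ π → ¬ IsPosCycle V ((π.drop i).take l)

/-!
Write `W > 0` for the weight of the chosen cycle `γ_q` and `L ≤ |Q|` for its number of
transitions. By maximality of chains, a bounded chain `C` contains every counter value of its
residue class between two of its own values (the run iterating `γ_q` between them passes through
all of them), and `C \ U_n` is upward closed in `C`: for `n > 0` because `U_n` is downward closed
in chains, for `n = 0` because a bounded chain meeting an unbounded one could be enlarged.

A configuration `(q, x)` of `δ_n(C)` is not in `U_0`, so iterating `γ_q` from `x` is eventually
blocked, necessarily by the guard of the state at some position `i < L` of the cycle. With a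
single guard per state, `i` determines `x` modulo `W`, so `x` is determined by `i` together with
the point of `C \ U_n` in its residue class lying in the same window of length `W`. Hence
`|δ_n(C)| ≤ L · |C \ U_n|`.
-/

lemma foldr_min_le_of_mem {α : Type*} [LinearOrder α] {l : List α} {x : α} (b : α)
    (hx : x ∈ l) : l.foldr min b ≤ x := by
  induction l with
  | nil => simp at hx
  | cons a l ih =>
    rcases List.mem_cons.1 hx with rfl | hx
    · exact min_le_left _ _
    · exact (min_le_right _ _).trans (ih hx)

section CycleIteration

variable {V : OneVASS Q} {Γ : List Q} {q : Q}

lemma pathWeight_cons_cons (a b : Q) (l : List Q) :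
    pathWeight V (a :: b :: l) = V.w a b + pathWeight V (b :: l) := by
  simp [pathWeight]

lemma pathWeight_take_one (l : List Q) : pathWeight V (l.take 1) = 0 := by
  cases l <;> rfl

lemma pathWeight_append_of_getLast? {π : List Q} {a : Q} (ρ : List Q)
    (h : π.getLast? = some a) :
    pathWeight V (π ++ ρ) = pathWeight V π + pathWeight V (a :: ρ) := by
  induction π with
  | nil => simp at h
  | cons x l ih =>
    cases l with
    | nil =>
      obtain rfl : x = a := by simpa using h
      simp [pathWeight]
    | cons y m =>
      rw [List.getLast?_cons_cons] at h
      rw [List.cons_append, List.cons_append, pathWeight_cons_cons, ← List.cons_append, ih h,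
        pathWeight_cons_cons]
      ring

lemma pmin_le_pathWeight_take {i : ℕ} (hi : i ≤ Γ.length) :
    pmin V Γ ≤ pathWeight V (Γ.take i) :=
  foldr_min_le_of_mem _ (List.mem_map.2 ⟨i, List.mem_range.2 (by omega), rfl⟩)

lemma IsPath.append_tail {π ρ : List Q} (hπ : IsPath V π) (hρ : IsPath V ρ)
    (h : π.getLast? = ρ.head?) : IsPath V (π ++ ρ.tail) := by
  induction π with
  | nil => exact hπ.elim
  | cons x l ih =>
    cases l with
    | nil =>
      obtain _ | ⟨b, m⟩ := ρ
      · simp at h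
      · obtain rfl : x = b := by simpa using h
        simpa using hρ
    | cons y m =>
      rw [List.getLast?_cons_cons] at h
      exact ⟨hπ.1, ih hπ.2 h⟩

lemma IsCycleOn.cons_tail (hΓ : IsCycleOn V Γ q) : q :: Γ.tail = Γ := by
  obtain ⟨-, -, hh, -⟩ := hΓ
  cases Γ with
  | nil => simp at hh
  | cons a l =>
    obtain rfl : a = q := by simpa using hh
    rfl

lemma prefix_iterCycle (Γ : List Q) (k : ℕ) : Γ <+: iterCycle Γ k := by
  induction k with
  | zero => exact List.prefix_refl Γ
  | succ k ih => exact ih.trans (List.prefix_append _ _)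

lemma length_iterCycle (hΓ : Γ ≠ []) (k : ℕ) :
    (iterCycle Γ k).length = (k + 1) * (Γ.length - 1) + 1 := by
  have := List.length_pos_of_ne_nil hΓ
  induction k with
  | zero => simp [iterCycle]; omega
  | succ k ih => rw [iterCycle, List.length_append, ih, List.length_tail, add_mul (k + 1)]; omega

lemma IsCycleOn.iterate (hΓ : IsCycleOn V Γ q) (k : ℕ) : IsCycleOn V (iterCycle Γ k) q := by
  induction k with
  | zero => exact hΓ
  | succ k ih =>
    obtain ⟨hp, h2, hh, hl⟩ := hΓ
    obtain ⟨ihp, ih2, ihh, ihl⟩ := ih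
    have htail : Γ.tail ≠ [] := List.ne_nil_of_length_pos (by simp; omega)
    refine ⟨ihp.append_tail hp (ihl.trans hh.symm), by simp [iterCycle]; omega, ?_, ?_⟩
    · rw [iterCycle, List.head?_append, ihh]; rfl
    · rw [iterCycle, List.getLast?_append, List.getLast?_tail, if_neg (by omega), hl]; rfl

lemma iterCycle_succ' (hΓ : Γ ≠ []) (k : ℕ) :
    iterCycle Γ (k + 1) = Γ ++ (iterCycle Γ k).tail := by
  induction k with
  | zero => rfl
  | succ k ih =>
    have hne : iterCycle Γ k ≠ [] := fun h =>
      hΓ (List.prefix_nil.1 (h ▸ prefix_iterCycle Γ k))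
    calc iterCycle Γ (k + 1 + 1) = iterCycle Γ (k + 1) ++ Γ.tail := rfl
      _ = Γ ++ ((iterCycle Γ k).tail ++ Γ.tail) := by rw [ih, List.append_assoc]
      _ = Γ ++ (iterCycle Γ (k + 1)).tail := by rw [← List.tail_append_of_ne_nil hne]; rfl

lemma IsCycleOn.iterCycle_succ_eq_dropLast_append (hΓ : IsCycleOn V Γ q) (k : ℕ) :
    iterCycle Γ (k + 1) = Γ.dropLast ++ iterCycle Γ k := by
  have hne : Γ ≠ [] := List.ne_nil_of_length_pos (by have := hΓ.2.1; omega)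
  have hlast : Γ.getLast hne = q := by simpa [List.getLast?_eq_some_getLast hne] using hΓ.2.2.2
  have hΓq : Γ.dropLast ++ [q] = Γ := hlast ▸ List.dropLast_append_getLast hne
  calc iterCycle Γ (k + 1) = Γ ++ (iterCycle Γ k).tail := iterCycle_succ' hne k
    _ = Γ.dropLast ++ [q] ++ (iterCycle Γ k).tail := by rw [hΓq]
    _ = Γ.dropLast ++ iterCycle Γ k := by
      rw [List.append_assoc, List.singleton_append, (hΓ.iterate k).cons_tail]

end CycleIteration

section UnrolledCycle

variable {V : OneVASS Q} {Γ : List Q} {q : Q}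

/-- The counter after `j` steps of the run iterating the cycle `Γ` from counter value `z`:
step `j` is step `j % L` of `Γ` after `j / L` full rounds, where `L = Γ.length - 1`. -/
def cycleCounter (V : OneVASS Q) (Γ : List Q) (z j : ℕ) : ℤ :=
  z + (j / (Γ.length - 1) : ℕ) * pathWeight V Γ +
    pathWeight V (Γ.take (j % (Γ.length - 1) + 1))

def CycleSafe (V : OneVASS Q) (Γ : List Q) (q : Q) (z j : ℕ) : Prop :=
  0 ≤ cycleCounter V Γ z j ∧
    (cycleCounter V Γ z j).toNat ∈ V.D (Γ.getD (j % (Γ.length - 1)) q)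

lemma IsCycleOn.counterAt_iterCycle (hΓ : IsCycleOn V Γ q) (z K : ℕ) {j : ℕ}
    (hj : j ≤ (K + 1) * (Γ.length - 1)) :
    counterAt V z (iterCycle Γ K) j = cycleCounter V Γ z j := by
  have h2 := hΓ.2.1
  have hL : 0 < Γ.length - 1 := by omega
  have hshort : ∀ K j, j < Γ.length - 1 →
      counterAt V z (iterCycle Γ K) j = cycleCounter V Γ z j := by
    intro K j hjL
    obtain ⟨s, hs⟩ := prefix_iterCycle Γ K
    rw [counterAt, cycleCounter, ← hs, List.take_append_of_le_length (by omega),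
      Nat.div_eq_of_lt hjL, Nat.mod_eq_of_lt hjL]
    simp
  induction K generalizing j with
  | zero =>
    rw [zero_add, one_mul] at hj
    rcases hj.lt_or_eq with hjL | rfl
    · exact hshort 0 j hjL
    rw [counterAt, cycleCounter, Nat.div_self hL, Nat.mod_self, pathWeight_take_one, iterCycle,
      List.take_of_length_le (by omega)]
    simp
  | succ K ih =>
    rcases lt_or_ge j (Γ.length - 1) with hjL | hjL
    · exact hshort _ j hjL
    obtain ⟨i, rfl⟩ := Nat.exists_eq_add_of_le hjL
    have hi := ih (j := i) (by rw [add_mul] at hj; omega)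
    rw [counterAt, cycleCounter] at hi
    rw [counterAt, iterCycle_succ' (List.ne_nil_of_length_pos (by omega)), List.take_append,
      List.take_of_length_le (by omega), show Γ.length - 1 + i + 1 - Γ.length = i by omega,
      pathWeight_append_of_getLast? _ hΓ.2.2.2, ← List.take_succ_cons, (hΓ.iterate K).cons_tail,
      cycleCounter, Nat.add_div_left i hL, Nat.add_mod_left, Nat.cast_succ]
    linarith

lemma IsCycleOn.getD_iterCycle (hΓ : IsCycleOn V Γ q) (K : ℕ) {j : ℕ}
    (hj : j ≤ (K + 1) * (Γ.length - 1)) :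
    (iterCycle Γ K).getD j q = Γ.getD (j % (Γ.length - 1)) q := by
  have h2 := hΓ.2.1
  have hshort : ∀ K j, j < Γ.length - 1 →
      (iterCycle Γ K).getD j q = Γ.getD (j % (Γ.length - 1)) q := by
    intro K j hjL
    obtain ⟨s, hs⟩ := prefix_iterCycle Γ K
    rw [← hs, List.getD_append _ _ _ _ (by omega), Nat.mod_eq_of_lt hjL]
  induction K generalizing j with
  | zero =>
    rw [zero_add, one_mul] at hj
    rcases hj.lt_or_eq with hjL | rfl
    · exact hshort 0 j hjL
    simp only [iterCycle, Nat.mod_self, List.getD_eq_getElem?_getD, ← List.getLast?_eq_getElem?,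
      ← List.head?_eq_getElem?, hΓ.2.2.1, hΓ.2.2.2]
  | succ K ih =>
    rcases lt_or_ge j (Γ.length - 1) with hjL | hjL
    · exact hshort _ j hjL
    obtain ⟨i, rfl⟩ := Nat.exists_eq_add_of_le hjL
    rw [hΓ.iterCycle_succ_eq_dropLast_append, List.getD_append_right _ _ _ _ (by simp),
      List.length_dropLast, Nat.add_sub_cancel_left, ih (by rw [add_mul] at hj; omega),
      Nat.add_mod_left]

lemma IsCycleOn.isValidRun_iterCycle_iff (hΓ : IsCycleOn V Γ q) (K z : ℕ) :
    IsValidRun V (iterCycle Γ K) z ↔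
      ∀ j ≤ (K + 1) * (Γ.length - 1), CycleSafe V Γ q z j := by
  have hlen : ∀ j, j < (iterCycle Γ K).length ↔ j ≤ (K + 1) * (Γ.length - 1) := by
    have := length_iterCycle (Γ := Γ) (List.ne_nil_of_length_pos (by have := hΓ.2.1; omega)) K
    omega
  have hcounter := fun j => hΓ.counterAt_iterCycle z K (j := j)
  have hstate : ∀ j (hj : j < (iterCycle Γ K).length),
      (iterCycle Γ K).get ⟨j, hj⟩ = Γ.getD (j % (Γ.length - 1)) q := by
    intro j hj
    rw [List.get_eq_getElem, ← List.getD_eq_getElem _ q hj,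
      hΓ.getD_iterCycle K ((hlen j).1 hj)]
  constructor
  · rintro ⟨⟨-, hnonneg⟩, hguard⟩ j hj
    have hj' := (hlen j).2 hj
    unfold CycleSafe
    rw [← hcounter j hj, ← hstate j hj']
    exact ⟨hnonneg j hj', hguard j hj'⟩
  · intro h
    refine ⟨⟨(hΓ.iterate K).1, fun j hj => ?_⟩, fun j hj => ?_⟩
    · rw [hcounter j ((hlen j).1 hj)]
      exact (h j ((hlen j).1 hj)).1
    · rw [hcounter j ((hlen j).1 hj), hstate]
      exact (h j ((hlen j).1 hj)).2

lemma IsCycleOn.pathWeight_iterCycle (hΓ : IsCycleOn V Γ q) (K : ℕ) :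
    pathWeight V (iterCycle Γ K) = (K + 1 : ℕ) * pathWeight V Γ := by
  have h2 := hΓ.2.1
  have := hΓ.counterAt_iterCycle 0 K le_rfl
  rwa [counterAt, cycleCounter, List.take_of_length_le
      (by rw [length_iterCycle (Γ := Γ) (List.ne_nil_of_length_pos (by omega))]),
    Nat.mul_div_cancel _ (by omega), Nat.mul_mod_left, pathWeight_take_one, Nat.cast_zero,
    zero_add, zero_add, add_zero] at this

lemma cycleCounter_add_mul (h2 : 2 ≤ Γ.length) (hW : 0 ≤ pathWeight V Γ) (z m j : ℕ) :
    cycleCounter V Γ (z + m * (pathWeight V Γ).toNat) j =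
      cycleCounter V Γ z (m * (Γ.length - 1) + j) := by
  rw [cycleCounter, cycleCounter, Nat.mul_comm m (Γ.length - 1), Nat.mul_add_div (by omega),
    Nat.mul_add_mod]
  push_cast
  rw [Int.toNat_of_nonneg hW]
  ring

lemma cycleSafe_add_mul (h2 : 2 ≤ Γ.length) (hW : 0 ≤ pathWeight V Γ) (z m j : ℕ) :
    CycleSafe V Γ q (z + m * (pathWeight V Γ).toNat) j ↔
      CycleSafe V Γ q z (m * (Γ.length - 1) + j) := by
  rw [CycleSafe, CycleSafe, cycleCounter_add_mul h2 hW, Nat.mul_add_mod_self_right]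

lemma cycleCounter_nonneg (h2 : 2 ≤ Γ.length) (hW : 0 ≤ pathWeight V Γ) {z : ℕ}
    (hz : 0 ≤ (z : ℤ) + pmin V Γ) (j : ℕ) : 0 ≤ cycleCounter V Γ z j := by
  have hpmin : pmin V Γ ≤ pathWeight V (Γ.take (j % (Γ.length - 1) + 1)) :=
    pmin_le_pathWeight_take (by have := Nat.mod_lt j (show 0 < Γ.length - 1 by omega); omega)
  have hcycles : 0 ≤ ((j / (Γ.length - 1) : ℕ) : ℤ) * pathWeight V Γ :=
    mul_nonneg (Nat.cast_nonneg _) hW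
  rw [cycleCounter]
  linarith

end UnrolledCycle

lemma exists_eq_add_mul_of_modEq {z y W : ℕ} (hzy : z ≤ y) (h : z ≡ y [MOD W]) :
    ∃ m, y = z + m * W := by
  obtain ⟨m, hm⟩ := (Nat.modEq_iff_dvd' hzy).1 h
  exact ⟨m, by rw [mul_comm]; omega⟩

section Chains

variable {V : OneVASS Q} {γ : Q → List Q} {q : Q} {r : ℕ} {C : Set (Q × ℕ)}

lemma Wnat_pos (hW : 0 < pathWeight V (γ q)) : 0 < Wnat V γ q := Int.lt_toNat.2 hW

lemma chainLinked_iff (hΓ : IsCycleOn V (γ q) q) (hW : 0 ≤ pathWeight V (γ q)) {z z' : ℕ} :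
    chainLinked V γ q z z' ↔ ∃ k, 0 < k ∧ z' = z + k * Wnat V γ q ∧
      ∀ j ≤ k * ((γ q).length - 1), CycleSafe V (γ q) q z j := by
  have hz' : ∀ k : ℕ, (z' : ℤ) = z + pathWeight V (iterCycle (γ q) k) ↔
      z' = z + (k + 1) * Wnat V γ q := by
    intro k
    rw [hΓ.pathWeight_iterCycle, ← Int.toNat_of_nonneg hW]
    norm_cast
  constructor
  · rintro ⟨k, hrun, he⟩
    exact ⟨k + 1, k.succ_pos, (hz' k).1 he, (hΓ.isValidRun_iterCycle_iff k z).1 hrun⟩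
  · rintro ⟨k, hk, he, hsafe⟩
    obtain ⟨k, rfl⟩ := Nat.exists_eq_succ_of_ne_zero hk.ne'
    exact ⟨k, (hΓ.isValidRun_iterCycle_iff k z).2 hsafe, (hz' k).2 he⟩

lemma chainLinked_trans (hΓ : IsCycleOn V (γ q) q) (hW : 0 ≤ pathWeight V (γ q))
    {z z' z'' : ℕ} (h₁ : chainLinked V γ q z z') (h₂ : chainLinked V γ q z' z'') :
    chainLinked V γ q z z'' := by
  rw [chainLinked_iff hΓ hW] at h₁ h₂ ⊢
  obtain ⟨k₁, hk₁, rfl, hs₁⟩ := h₁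
  obtain ⟨k₂, hk₂, rfl, hs₂⟩ := h₂
  refine ⟨k₁ + k₂, by omega, by ring, fun j hj => ?_⟩
  rcases le_or_gt j (k₁ * ((γ q).length - 1)) with hj₁ | hj₁
  · exact hs₁ j hj₁
  obtain ⟨i, rfl⟩ := Nat.exists_eq_add_of_le hj₁.le
  have := hs₂ i (by rw [add_mul] at hj; omega)
  rwa [Wnat, cycleSafe_add_mul hΓ.2.1 hW] at this

lemma chainLinked_prefix (hΓ : IsCycleOn V (γ q) q) (hW : 0 ≤ pathWeight V (γ q))
    {z y z'' : ℕ} (h : chainLinked V γ q z z'') (hzy : z < y) (hyz : y ≤ z'')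
    (hmod : z ≡ y [MOD Wnat V γ q]) : chainLinked V γ q z y := by
  rw [chainLinked_iff hΓ hW] at h ⊢
  obtain ⟨k, -, rfl, hs⟩ := h
  obtain ⟨m, rfl⟩ := exists_eq_add_mul_of_modEq hzy.le hmod
  have hW' : 0 < Wnat V γ q := Nat.pos_of_ne_zero fun h0 => by simp [h0] at hzy
  have hmk : m ≤ k := Nat.le_of_mul_le_mul_right (by omega) hW'
  exact ⟨m, Nat.pos_of_ne_zero fun h0 => by simp [h0] at hzy, rfl,
    fun j hj => hs j (hj.trans (Nat.mul_le_mul_right _ hmk))⟩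

lemma chainLinked_suffix (hΓ : IsCycleOn V (γ q) q) (hW : 0 ≤ pathWeight V (γ q))
    {z y z'' : ℕ} (h : chainLinked V γ q z z'') (hzy : z ≤ y) (hyz : y < z'')
    (hmod : z ≡ y [MOD Wnat V γ q]) : chainLinked V γ q y z'' := by
  rw [chainLinked_iff hΓ hW] at h ⊢
  obtain ⟨k, -, rfl, hs⟩ := h
  obtain ⟨m, rfl⟩ := exists_eq_add_mul_of_modEq hzy hmod
  have hmk : m < k := Nat.lt_of_mul_lt_mul_right (a := Wnat V γ q) (by omega)
  refine ⟨k - m, by omega, by rw [add_assoc, ← add_mul, Nat.add_sub_cancel' hmk.le], ?_⟩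
  intro j hj
  rw [Wnat, cycleSafe_add_mul hΓ.2.1 hW]
  have := Nat.mul_le_mul_right ((γ q).length - 1) hmk.le
  exact hs _ (by rw [Nat.sub_mul] at hj; omega)

lemma exists_isChainIn_superset {O : Set (Q × ℕ)} (hO : O ⊆ resClass V γ q r)
    (hOc : ChainCond V γ q O) : ∃ C, O ⊆ C ∧ IsChainIn V γ q r C := by
  let S : Set (Set (Q × ℕ)) := {A | A ⊆ resClass V γ q r ∧ ChainCond V γ q A}
  have hS : ∀ c ⊆ S, _root_.IsChain (· ⊆ ·) c → c.Nonempty →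
      ∃ ub ∈ S, ∀ A ∈ c, A ⊆ ub := by
    intro c hc hchain _
    refine ⟨⋃₀ c, ⟨Set.sUnion_subset fun A hA => (hc hA).1, ?_⟩,
      fun A hA => Set.subset_sUnion_of_mem hA⟩
    rintro x ⟨A, hA, hxA⟩ x' ⟨B, hB, hxB⟩ hlt
    rcases hchain.total hA hB with h | h
    · exact (hc hB).2 x (h hxA) x' hxB hlt
    · exact (hc hA).2 x hxA x' (h hxB) hlt
  obtain ⟨C, hOC, hmax⟩ := zorn_subset_nonempty S hS O ⟨hO, hOc⟩
  exact ⟨C, hOC, hmax.prop.1, hmax.prop.2,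
    fun C' hCC' hC' hC'c => (hmax.eq_of_subset ⟨hC', hC'c⟩ hCC').symm⟩

lemma IsChainIn.isChain (hW : 0 < pathWeight V (γ q)) (hC : IsChainIn V γ q r C)
    {c : Q × ℕ} (hc : c ∈ C) : IsChain V γ C := by
  obtain ⟨⟨hq, -⟩, hcq, hr⟩ := hC.1 hc
  exact ⟨q, r, hcq ▸ hq, hr ▸ Nat.mod_lt _ (Wnat_pos hW), hC⟩

lemma IsChainIn.mem_of_le_of_le (hΓ : IsCycleOn V (γ q) q) (hW : 0 ≤ pathWeight V (γ q))
    (hC : IsChainIn V γ q r C) {a b y : ℕ} (ha : (q, a) ∈ C) (hb : (q, b) ∈ C)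
    (hay : a ≤ y) (hyb : y ≤ b) (hy : y % Wnat V γ q = r) : (q, y) ∈ C := by
  obtain ⟨hres, hcond, hmax⟩ := hC
  have hmod : ∀ c ∈ C, c.2 ≡ y [MOD Wnat V γ q] := fun c hc => (hres hc).2.2.trans hy.symm
  have hyres : (q, y) ∈ resClass V γ q r := by
    obtain ⟨⟨hq, hpmin⟩, -, -⟩ := hres ha
    exact ⟨⟨hq, by simp only at hpmin ⊢; omega⟩, rfl, hy⟩
  have hins : ChainCond V γ q (insert (q, y) C) := by
    rintro c (rfl | hc) c' (rfl | hc') hlt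
    · exact absurd hlt (lt_irrefl _)
    · exact chainLinked_suffix hΓ hW (hcond _ ha _ hc' (by simp only at hlt ⊢; omega)) hay hlt
        (hmod _ ha)
    · exact chainLinked_prefix hΓ hW (hcond _ hc _ hb (by simp only at hlt ⊢; omega)) hlt hyb
        (hmod _ hc)
    · exact hcond _ hc _ hc' hlt
  rw [← hmax _ (Set.subset_insert _ _) (Set.insert_subset hyres hres) hins]
  exact Set.mem_insert _ _

lemma IsChainIn.disjoint_U_zero (hΓ : IsCycleOn V (γ q) q) (hW : 0 ≤ pathWeight V (γ q))
    (hC : IsChainIn V γ q r C) (hbdd : chainBounded C) : Disjoint C (U V γ 0) := by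
  obtain ⟨Mb, hMb⟩ := hbdd
  have hle : ∀ c ∈ C, c.2 ≤ Mb := fun c hc => hMb (Set.mem_image_of_mem _ hc)
  rw [Set.disjoint_left]
  rintro c hc ⟨C', ⟨⟨q', r', -, -, hC'⟩, hunb⟩, hc'⟩
  obtain rfl : q = q' := (hC.1 hc).2.1.symm.trans (hC'.1 hc').2.1
  obtain rfl : r = r' := (hC.1 hc).2.2.symm.trans (hC'.1 hc').2.2
  have hlink : ∀ x ∈ C, ∀ x' ∈ C', Mb < x'.2 → chainLinked V γ q x.2 x'.2 := by
    intro x hx x' hx' hMx'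
    have hcx' := hC'.2.1 c hc' x' hx' (by have := hle c hc; omega)
    rcases lt_or_ge x.2 c.2 with hxc | hxc
    · exact chainLinked_trans hΓ hW (hC.2.1 x hx c hc hxc) hcx'
    · exact chainLinked_suffix hΓ hW hcx' hxc (by have := hle x hx; omega)
        ((hC.1 hc).2.2.trans (hC.1 hx).2.2.symm)
  -- gluing onto `C` the part of `C'` above all of `C` still gives a chain, so by maximality
  -- nothing is added; but that part is nonempty since `C'` is unbounded
  have hbig : C ∪ {x ∈ C' | Mb < x.2} = C := by
    refine hC.2.2 _ Set.subset_union_left (Set.union_subset hC.1 fun x hx => hC'.1 hx.1) ?_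
    rintro x (hx | hx) x' (hx' | hx') hlt
    · exact hC.2.1 x hx x' hx' hlt
    · exact hlink x hx x' hx'.1 hx'.2
    · exact absurd (hle x' hx') (by have := hx.2; omega)
    · exact hC'.2.1 x hx.1 x' hx'.1 hlt
  obtain ⟨_, ⟨x, hx, rfl⟩, hMx⟩ := not_bddAbove_iff.1 hunb Mb
  exact absurd (hle x (hbig ▸ Or.inr ⟨hx, hMx⟩)) (not_le.2 hMx)

lemma U_monotone (V : OneVASS Q) (γ : Q → List Q) : Monotone (U V γ) :=
  monotone_nat_of_le_succ fun _ _ hc _ hS => hS.1 (Or.inl hc)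

lemma dcClosed_U_succ (V : OneVASS Q) (γ : Q → List Q) (n : ℕ) :
    dcClosed V γ (U V γ (n + 1)) :=
  fun C hC c hc c' hc' hle S hS => hS.2 C hC c ⟨hc.1 S hS, hc.2⟩ c' hc' hle

lemma IsChainIn.notMem_U_of_le (hΓ : IsCycleOn V (γ q) q) (hW : 0 < pathWeight V (γ q))
    (hC : IsChainIn V γ q r C) (hbdd : chainBounded C) {n a b : ℕ} (ha : (q, a) ∈ C \ U V γ n)
    (hb : (q, b) ∈ C) (hab : a ≤ b) : (q, b) ∉ U V γ n := by
  cases n with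
  | zero => exact Set.disjoint_left.1 (hC.disjoint_U_zero hΓ hW.le hbdd) hb
  | succ n =>
    exact fun hbU => ha.2 (dcClosed_U_succ V γ n C (hC.isChain hW hb) _ ⟨hbU, hb⟩ _ ha.1 hab)

lemma IsChainIn.mem_diff_U_of_le (hΓ : IsCycleOn V (γ q) q) (hW : 0 < pathWeight V (γ q))
    (hC : IsChainIn V γ q r C) (hbdd : chainBounded C) {n a b y : ℕ}
    (ha : (q, a) ∈ C \ U V γ n) (hb : (q, b) ∈ C) (hay : a ≤ y) (hyb : y ≤ b)
    (hy : y ≡ a [MOD Wnat V γ q]) : (q, y) ∈ C \ U V γ n := by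
  have hyC := hC.mem_of_le_of_le hΓ hW.le ha.1 hb hay hyb (Eq.trans hy (hC.1 ha.1).2.2)
  exact ⟨hyC, hC.notMem_U_of_le hΓ hW hbdd ha hyC hay⟩

lemma mem_U_zero_of_forall_cycleSafe (hΓ : IsCycleOn V (γ q) q) (hW : 0 < pathWeight V (γ q))
    {x : ℕ} (hx : (q, x) ∈ ConfPlus V γ) (hsafe : ∀ j, CycleSafe V (γ q) q x j) :
    (q, x) ∈ U V γ 0 := by
  let O : Set (Q × ℕ) := Set.range fun k : ℕ => (q, x + k * Wnat V γ q)
  have hO : O ⊆ resClass V γ q (x % Wnat V γ q) := by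
    rintro _ ⟨k, rfl⟩
    refine ⟨⟨hx.1, ?_⟩, rfl, Nat.add_mul_mod_self_right x k _⟩
    have := hx.2
    simp only at this ⊢
    push_cast
    have : (0 : ℤ) ≤ k * Wnat V γ q := by positivity
    linarith
  have hOc : ChainCond V γ q O := by
    rintro _ ⟨k, rfl⟩ _ ⟨k', rfl⟩ hlt
    have hkk' : k < k' := Nat.lt_of_mul_lt_mul_right (a := Wnat V γ q) (by simp only at hlt; omega)
    rw [chainLinked_iff hΓ hW.le]
    refine ⟨k' - k, by omega, by rw [add_assoc, ← add_mul, Nat.add_sub_cancel' hkk'.le], ?_⟩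
    intro j _
    rw [Wnat, cycleSafe_add_mul hΓ.2.1 hW.le]
    exact hsafe _
  obtain ⟨C, hOC, hC⟩ := exists_isChainIn_superset hO hOc
  have hxC : (q, x) ∈ C := hOC ⟨0, by simp⟩
  refine ⟨C, ⟨hC.isChain hW hxC, fun ⟨Mb, hMb⟩ => ?_⟩, hxC⟩
  have := hMb (Set.mem_image_of_mem Prod.snd (hOC ⟨Mb + 1, rfl⟩))
  dsimp only at this
  have := Nat.le_mul_of_pos_right (Mb + 1) (Wnat_pos hW)
  omega

end Chains

lemma SingleGuard.subsingleton_compl {V : OneVASS Q} (hD : SingleGuard V) (s : Q) :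
    (V.D s)ᶜ.Subsingleton := by
  rcases hD s with h | ⟨g, h⟩ <;> simp [h]

lemma modEq_of_not_cycleSafe {V : OneVASS Q} {Γ : List Q} {q : Q} (hD : SingleGuard V)
    (h2 : 2 ≤ Γ.length) (hW : 0 ≤ pathWeight V Γ) {z₁ z₂ j₁ j₂ : ℕ}
    (hz₁ : 0 ≤ (z₁ : ℤ) + pmin V Γ) (hz₂ : 0 ≤ (z₂ : ℤ) + pmin V Γ)
    (h₁ : ¬ CycleSafe V Γ q z₁ j₁) (h₂ : ¬ CycleSafe V Γ q z₂ j₂)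
    (hj : j₁ % (Γ.length - 1) = j₂ % (Γ.length - 1)) :
    z₁ ≡ z₂ [MOD (pathWeight V Γ).toNat] := by
  have hc₁ := cycleCounter_nonneg h2 hW hz₁ j₁
  have hc₂ := cycleCounter_nonneg h2 hW hz₂ j₂
  simp only [CycleSafe, hc₁, hc₂, true_and, hj] at h₁ h₂
  have heq : cycleCounter V Γ z₁ j₁ = cycleCounter V Γ z₂ j₂ := by
    have := hD.subsingleton_compl _ h₁ h₂
    omega
  rw [cycleCounter, cycleCounter, hj] at heq
  rw [← Int.natCast_modEq_iff, Int.toNat_of_nonneg hW, Int.modEq_iff_dvd]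
  exact ⟨(j₁ / (Γ.length - 1) : ℕ) - (j₂ / (Γ.length - 1) : ℕ),
    by linear_combination -heq⟩

lemma eq_of_modEq_of_sub_div_eq {m x y W : ℕ} (hx : m ≤ x) (hy : m ≤ y)
    (hmod : x ≡ y [MOD W]) (hdiv : (x - m) / W = (y - m) / W) : x = y := by
  have hmod' : (x - m) % W = (y - m) % W :=
    Nat.ModEq.add_right_cancel' m (by rwa [Nat.sub_add_cancel hx, Nat.sub_add_cancel hy])
  have hx' := Nat.div_add_mod (x - m) W
  have hy' := Nat.div_add_mod (y - m) W
  rw [hdiv, hmod'] at hx'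
  omega

lemma ncard_le_mul_ncard_of_injOn {α β : Type*} {s : Set α} {t : Set β} {L : ℕ}
    (f : α → ℕ × β) (hf : ∀ a ∈ s, (f a).1 < L ∧ (f a).2 ∈ t) (hinj : s.InjOn f)
    (ht : t.Finite) : s.ncard ≤ L * t.ncard :=
  calc s.ncard ≤ ((Finset.range L : Set ℕ) ×ˢ t).ncard :=
        Set.ncard_le_ncard_of_injOn f (fun a ha => by simpa using hf a ha) hinj
          ((Finset.range L).finite_toSet.prod ht)
    _ = L * t.ncard := by rw [Set.ncard_prod, Set.ncard_coe_finset, Finset.card_range]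

section Delta

variable {V : OneVASS Q} {γ : Q → List Q} {n : ℕ} {q : Q} {r : ℕ} {C : Set (Q × ℕ)}

lemma deltaC_finite (hbdd : chainBounded C) : (deltaC V γ n q C).Finite := by
  obtain ⟨Mb, hMb⟩ := hbdd
  refine ((Set.finite_singleton q).prod (Set.finite_Iic Mb)).subset ?_
  rintro c ⟨-, hq, -, z₁, z₂, -, hz₂, -, hcz₂⟩
  exact ⟨hq, hcz₂.trans (hMb (Set.mem_image_of_mem Prod.snd hz₂.1))⟩

lemma IsChainIn.finite (hC : IsChainIn V γ q r C) (hbdd : chainBounded C) : C.Finite := by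
  obtain ⟨Mb, hMb⟩ := hbdd
  refine ((Set.finite_singleton q).prod (Set.finite_Iic Mb)).subset fun c hc => ?_
  exact ⟨(hC.1 hc).2.1, hMb (Set.mem_image_of_mem Prod.snd hc)⟩

lemma ncard_deltaC_le (hD : SingleGuard V) (hΓ : IsCycleOn V (γ q) q)
    (hW : 0 < pathWeight V (γ q)) (hC : IsChainIn V γ q r C) (hbdd : chainBounded C) :
    (deltaC V γ n q C).ncard ≤ ((γ q).length - 1) * (C \ U V γ n).ncard := by
  classical
  by_cases hne : ∃ z, (q, z) ∈ C \ U V γ n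
  swap
  · have hδ : deltaC V γ n q C = ∅ :=
      Set.eq_empty_of_forall_notMem fun _ ⟨_, _, _, z, _, hz, _⟩ => hne ⟨z, hz⟩
    simp [hδ]
  obtain ⟨m, hm, hmin⟩ :
      ∃ m, (q, m) ∈ C \ U V γ n ∧ ∀ z, (q, z) ∈ C \ U V γ n → m ≤ z :=
    ⟨Nat.find hne, Nat.find_spec hne, fun z hz => Nat.find_min' hne hz⟩
  have hrep : ∀ c ∈ deltaC V γ n q C,
      m ≤ c.2 ∧ (q, m + Wnat V γ q * ((c.2 - m) / Wnat V γ q)) ∈ C \ U V γ n := by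
    rintro c ⟨-, -, -, z₁, z₂, hz₁, hz₂, hcz₁, hcz₂⟩
    have hmc : m ≤ c.2 := (hmin z₁ hz₁).trans hcz₁
    have hle := Nat.mul_div_le (c.2 - m) (Wnat V γ q)
    exact ⟨hmc, hC.mem_diff_U_of_le hΓ hW hbdd hm hz₂.1 (Nat.le_add_right _ _) (by omega)
      (Nat.add_mul_mod_self_left _ _ _)⟩
  have hpmin : ∀ c ∈ deltaC V γ n q C, 0 ≤ (c.2 : ℤ) + pmin V (γ q) := by
    rintro ⟨q', x⟩ ⟨hconf, rfl, -⟩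
    exact hconf.2
  have hblock : ∀ c ∈ deltaC V γ n q C, ∃ j, ¬ CycleSafe V (γ q) q c.2 j := by
    rintro ⟨q', x⟩ ⟨hconf, rfl, hU, -⟩
    by_contra! hsafe
    exact hU (U_monotone V γ (Nat.zero_le n) (mem_U_zero_of_forall_cycleSafe hΓ hW hconf hsafe))
  choose! key hkey using hblock
  refine ncard_le_mul_ncard_of_injOn
    (fun c => (key c % ((γ q).length - 1), (q, m + Wnat V γ q * ((c.2 - m) / Wnat V γ q))))
    (fun c hc => ⟨Nat.mod_lt _ (by have := hΓ.2.1; omega), (hrep c hc).2⟩) ?_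
    ((hC.finite hbdd).sdiff)
  rintro c₁ hc₁ c₂ hc₂ heq
  simp only [Prod.mk.injEq, true_and] at heq
  obtain ⟨hkey_eq, hdiv⟩ := heq
  have hmod := modEq_of_not_cycleSafe hD hΓ.2.1 hW.le (hpmin c₁ hc₁) (hpmin c₂ hc₂)
    (hkey c₁ hc₁) (hkey c₂ hc₂) hkey_eq
  refine Prod.ext (hc₁.2.1.trans hc₂.2.1.symm)
    (eq_of_modEq_of_sub_div_eq (W := Wnat V γ q) (hrep c₁ hc₁).1 (hrep c₂ hc₂).1 hmod ?_)
  exact Nat.eq_of_mul_eq_mul_left (Wnat_pos hW) (by omega)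

end Delta

/-- Lemma 5: for every `n` and every `n`-active bounded chain `C`,
`|δ_n(C)| ≤ |Q| · |C \ U_n|`. -/
theorem deltaC_card_le
    {Q : Type} [Fintype Q] (V : OneVASS Q) (hD : SingleGuard V)
    (γ : Q → List Q) (hγ : GammaChoice V γ)
    (n : ℕ) (q : Q) (r : ℕ) (C : Set (Q × ℕ))
    (hC : nActiveIn V γ q r n C) :
    (deltaC V γ n q C).Finite ∧
    (deltaC V γ n q C).ncard ≤ Fintype.card Q * (C \ U V γ n).ncard := by
  obtain ⟨hCin, hbdd, u, ⟨-, hu⟩, -⟩ := hC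
  obtain ⟨⟨hΓ, hnodup⟩, hW, -⟩ := hγ q (hu.2.1 ▸ hu.1.1)
  refine ⟨deltaC_finite hbdd, (ncard_deltaC_le hD hΓ hW hCin hbdd).trans ?_⟩
  exact Nat.mul_le_mul_right _ (by simpa using hnodup.length_le_card)

end VASSPaper
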